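/- arXiv:2303.02682 — 2 statements merged into one kernel-verified Lean document; each statement's English description precedes it below -/
import Mathlib

section
/- Let H be a complex Hilbert space and L, M closed linear subspaces with Q = L ∩ M, satisfying (1) c(L,M) < 1 and (2) the orthogonal complement of L + M in H is {0}. Then L + M = H, i.e., every vector x ∈ H can be written as x = x_L + x_M with x_L ∈ L and x_M ∈ M. -/
open scoped InnerProductSpace Pointwise

/-- The inclination `c(L,M)` of two subspaces `L`, `M` of a complex Hilbert space:
the supremum of `|⟪u,v⟫| / (‖u‖‖v‖)` over nonzero `u ∈ L ⊖ Q` and nonzero `v ∈ M ⊖ Q`,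
where `Q = L ⊓ M` and `L ⊖ Q = L ⊓ Qᗮ`, `M ⊖ Q = M ⊓ Qᗮ`. -/
noncomputable def inclination {H : Type*} [NormedAddCommGroup H] [InnerProductSpace ℂ H]
    (L M : Submodule ℂ H) : ℝ :=
  sSup {r : ℝ | ∃ u ∈ L ⊓ (L ⊓ M)ᗮ, ∃ v ∈ M ⊓ (L ⊓ M)ᗮ,
    u ≠ 0 ∧ v ≠ 0 ∧ r = ‖⟪u, v⟫_ℂ‖ / (‖u‖ * ‖v‖)}

/-!
The sum of closed subspaces `A`, `B` is closed as soon as `k ‖a‖ ≤ ‖a + b‖` for `a ∈ A`, `b ∈ B`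
and some `k > 0`, because then `(a, b) ↦ a + b` is antilipschitz on the complete space `A × B`.
Since `L + M = (L ⊖ Q) + M` for `Q = L ∩ M`, we take `u ∈ L ⊖ Q` and `v ∈ M`; writing `v = q + w`
with `q ∈ Q`, `w ∈ M ⊖ Q`, Pythagoras and the inclination bound `|⟪u, w⟫| ≤ c ‖u‖ ‖w‖` give
`(1 - c) ‖u‖² ≤ ‖u + v‖²`. Hence `L + M` is closed, and a closed subspace with trivial orthogonal
complement is the whole space.
-/

theorem Submodule.isClosed_sup_of_mul_norm_le_norm_add {𝕜 E : Type*} [NontriviallyNormedField 𝕜]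
    [NormedAddCommGroup E] [NormedSpace 𝕜 E] [CompleteSpace E] {A B : Submodule 𝕜 E}
    (hA : IsClosed (A : Set E)) (hB : IsClosed (B : Set E)) {k : ℝ} (hk : 0 < k)
    (h : ∀ a ∈ A, ∀ b ∈ B, k * ‖a‖ ≤ ‖a + b‖) : IsClosed ((A ⊔ B : Submodule 𝕜 E) : Set E) := by
  have : CompleteSpace A := hA.completeSpace_coe
  have : CompleteSpace B := hB.completeSpace_coe
  let f : A × B →L[𝕜] E := A.subtypeL.coprod B.subtypeL
  have hrange : ((A ⊔ B : Submodule 𝕜 E) : Set E) = Set.range f := by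
    have : LinearMap.range (f : A × B →ₗ[𝕜] E) = A ⊔ B := by
      simp [f, LinearMap.range_coprod]
    rw [← this, LinearMap.coe_range]
    rfl
  have hf : AntilipschitzWith (1 + k⁻¹).toNNReal f := by
    refine f.antilipschitz_of_bound fun ⟨a, b⟩ => ?_
    have ha := h a a.2 b b.2
    have hb : ‖(b : E)‖ ≤ ‖(a : E) + b‖ + ‖(a : E)‖ := by
      simpa using norm_sub_le ((a : E) + b) a
    have ha' : ‖(a : E)‖ ≤ k⁻¹ * ‖(a : E) + b‖ := by
      rw [inv_mul_eq_div, le_div_iff₀ hk, mul_comm]; exact ha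
    simp only [Prod.norm_def, Real.coe_toNNReal _ (by positivity : 0 ≤ 1 + k⁻¹), f,
      ContinuousLinearMap.coprod_apply, Submodule.coe_subtypeL, Submodule.coe_subtype,
      Submodule.coe_norm, max_le_iff]
    constructor <;> nlinarith [norm_nonneg ((a : E) + b)]
  rw [hrange]
  exact hf.isClosed_range f.uniformContinuous

theorem one_sub_mul_norm_sq_add_norm_sq_le {𝕜 E : Type*} [RCLike 𝕜] [NormedAddCommGroup E]
    [InnerProductSpace 𝕜 E] {c : ℝ} (hc : 0 ≤ c) {u v : E}
    (h : ‖⟪u, v⟫_𝕜‖ ≤ c * (‖u‖ * ‖v‖)) : (1 - c) * (‖u‖ ^ 2 + ‖v‖ ^ 2) ≤ ‖u + v‖ ^ 2 := by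
  have hre := abs_le.mp ((RCLike.abs_re_le_norm ⟪u, v⟫_𝕜).trans h)
  rw [norm_add_sq (𝕜 := 𝕜)]
  nlinarith [mul_nonneg hc (sq_nonneg (‖u‖ - ‖v‖))]

section Inclination

variable {H : Type*} [NormedAddCommGroup H] [InnerProductSpace ℂ H] {L M : Submodule ℂ H}

theorem inclination_nonneg : 0 ≤ inclination L M := by
  refine Real.sSup_nonneg fun r ⟨u, _, v, _, _, _, hr⟩ => ?_
  rw [hr]; positivity

theorem norm_inner_le_inclination_mul {u v : H} (hu : u ∈ L ⊓ (L ⊓ M)ᗮ)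
    (hv : v ∈ M ⊓ (L ⊓ M)ᗮ) : ‖⟪u, v⟫_ℂ‖ ≤ inclination L M * (‖u‖ * ‖v‖) := by
  rcases eq_or_ne u 0 with rfl | hu0
  · simp
  rcases eq_or_ne v 0 with rfl | hv0
  · simp
  have hpos : 0 < ‖u‖ * ‖v‖ := by positivity
  rw [← div_le_iff₀ hpos]
  refine le_csSup ⟨1, ?_⟩ ⟨u, hu, v, hv, hu0, hv0, rfl⟩
  rintro r ⟨u', -, v', -, hu', hv', rfl⟩
  rw [div_le_one (by positivity)]
  exact norm_inner_le_norm u' v'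

theorem one_sub_inclination_mul_norm_le_norm_add [(L ⊓ M).HasOrthogonalProjection] {u v : H}
    (hu : u ∈ L ⊓ (L ⊓ M)ᗮ) (hv : v ∈ M) : (1 - inclination L M) * ‖u‖ ≤ ‖u + v‖ := by
  set c := inclination L M
  obtain ⟨q, hq, w, hw, rfl⟩ := (L ⊓ M).exists_add_mem_mem_orthogonal v
  have hwM : w ∈ M ⊓ (L ⊓ M)ᗮ := ⟨by simpa using M.sub_mem hv hq.2, hw⟩
  have hcw : (1 - c) * (‖u‖ ^ 2 + ‖w‖ ^ 2) ≤ ‖u + w‖ ^ 2 :=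
    one_sub_mul_norm_sq_add_norm_sq_le inclination_nonneg (norm_inner_le_inclination_mul hu hwM)
  have hpyth : ‖u + (q + w)‖ ^ 2 = ‖q‖ ^ 2 + ‖u + w‖ ^ 2 := by
    have horth : ⟪q, u + w⟫_ℂ = 0 := by rw [inner_add_right, hu.2 q hq, hw q hq, add_zero]
    rw [show u + (q + w) = q + (u + w) by abel, sq, sq, sq,
      norm_add_sq_eq_norm_sq_add_norm_sq_of_inner_eq_zero q (u + w) horth]
  rcases le_or_gt 1 c with hc1 | hc1
  · nlinarith [norm_nonneg u, norm_nonneg (u + (q + w))]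
  have hc0 : 0 ≤ c := inclination_nonneg
  refine le_of_pow_le_pow_left₀ two_ne_zero (norm_nonneg _) ?_
  calc ((1 - c) * ‖u‖) ^ 2 ≤ (1 - c) * (‖u‖ ^ 2 + ‖w‖ ^ 2) := by
        nlinarith [mul_nonneg (mul_nonneg hc0 (sub_nonneg.2 hc1.le)) (sq_nonneg ‖u‖),
          mul_nonneg (sub_nonneg.2 hc1.le) (sq_nonneg ‖w‖)]
    _ ≤ ‖u + (q + w)‖ ^ 2 := by nlinarith [sq_nonneg ‖q‖]

end Inclination

theorem stmt_3_general {H : Type*} [NormedAddCommGroup H] [InnerProductSpace ℂ H] [CompleteSpace H]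
    (L M : Submodule ℂ H) (hL : IsClosed (L : Set H)) (hM : IsClosed (M : Set H))
    (hc : inclination L M < 1) (horth : (L ⊔ M)ᗮ = ⊥) :
    ∀ x : H, ∃ xL ∈ L, ∃ xM ∈ M, x = xL + xM := by
  have : CompleteSpace (L ⊓ M : Submodule ℂ H) := (hL.inter hM).completeSpace_coe
  have hsup : L ⊓ (L ⊓ M)ᗮ ⊔ M = L ⊔ M := by
    refine le_antisymm (sup_le_sup_right inf_le_left M) (sup_le ?_ le_sup_right)
    refine (Submodule.sup_orthogonal_inf_of_hasOrthogonalProjection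
      (inf_le_left : L ⊓ M ≤ L)).ge.trans ?_
    exact sup_le (le_sup_of_le_right inf_le_right) (le_sup_of_le_left (inf_comm _ _).le)
  have hclosed : IsClosed ((L ⊔ M : Submodule ℂ H) : Set H) :=
    hsup ▸ Submodule.isClosed_sup_of_mul_norm_le_norm_add (hL.inter (L ⊓ M).isClosed_orthogonal)
      hM (sub_pos.mpr hc) fun _ hu _ hv => one_sub_inclination_mul_norm_le_norm_add hu hv
  have : CompleteSpace (L ⊔ M : Submodule ℂ H) := hclosed.completeSpace_coe
  have htop : L ⊔ M = ⊤ := Submodule.orthogonal_eq_bot_iff.mp horth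
  intro x
  obtain ⟨xL, hxL, xM, hxM, hx⟩ := Submodule.mem_sup.mp (htop ▸ Submodule.mem_top : x ∈ L ⊔ M)
  exact ⟨xL, hxL, xM, hxM, hx.symm⟩

theorem stmt_3 {H : Type*} [NormedAddCommGroup H] [InnerProductSpace ℂ H] [CompleteSpace H]
    (L M : Submodule ℂ H) (hL : IsClosed (L : Set H)) (hM : IsClosed (M : Set H))
    (hLQ : ∃ u ∈ L ⊓ (L ⊓ M)ᗮ, u ≠ 0) (hMQ : ∃ v ∈ M ⊓ (L ⊓ M)ᗮ, v ≠ 0)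
    (hc : inclination L M < 1) (horth : (L ⊔ M)ᗮ = ⊥) :
    ∀ x : H, ∃ xL ∈ L, ∃ xM ∈ M, x = xL + xM :=
  stmt_3_general L M hL hM hc horth
end

section
/- Let H be a complex Hilbert space and L, M closed linear subspaces with L ∩ M = {0} and c(L,M) < 1. Then for every x ∈ L + M the representation x = x_L + x_M with x_L ∈ L, x_M ∈ M is unique, and ‖x_L‖ ≤ ‖x‖/√(1 − c(L,M)²) and ‖x_M‖ ≤ ‖x‖/√(1 − c(L,M)²). -/
open scoped InnerProductSpace Pointwise

lemma inclination_nonneg_s17 {H : Type*} [NormedAddCommGroup H] [InnerProductSpace ℂ H]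
    (L M : Submodule ℂ H) : 0 ≤ inclination L M := by
  apply Real.sSup_nonneg
  rintro r ⟨u, hu, v, hv, hu0, hv0, rfl⟩
  positivity

lemma inclination_bddAbove {H : Type*} [NormedAddCommGroup H] [InnerProductSpace ℂ H]
    (L M : Submodule ℂ H) :
    BddAbove {r : ℝ | ∃ u ∈ L ⊓ (L ⊓ M)ᗮ, ∃ v ∈ M ⊓ (L ⊓ M)ᗮ,
      u ≠ 0 ∧ v ≠ 0 ∧ r = ‖⟪u, v⟫_ℂ‖ / (‖u‖ * ‖v‖)} := by
  refine ⟨1, ?_⟩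
  rintro r ⟨u, hu, v, hv, hu0, hv0, rfl⟩
  rw [div_le_one (mul_pos (norm_pos_iff.mpr hu0) (norm_pos_iff.mpr hv0))]
  exact norm_inner_le_norm u v

lemma inner_le_inclination {H : Type*} [NormedAddCommGroup H] [InnerProductSpace ℂ H]
    {L M : Submodule ℂ H} (hQ : L ⊓ M = ⊥) {u v : H} (hu : u ∈ L) (hv : v ∈ M) :
    ‖⟪u, v⟫_ℂ‖ ≤ inclination L M * (‖u‖ * ‖v‖) := by
  rcases eq_or_ne u 0 with rfl | hu0
  · simp [inclination_nonneg_s17 L M]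
  rcases eq_or_ne v 0 with rfl | hv0
  · simp
  have hmem : ‖⟪u, v⟫_ℂ‖ / (‖u‖ * ‖v‖) ∈ {r : ℝ | ∃ u ∈ L ⊓ (L ⊓ M)ᗮ, ∃ v ∈ M ⊓ (L ⊓ M)ᗮ,
      u ≠ 0 ∧ v ≠ 0 ∧ r = ‖⟪u, v⟫_ℂ‖ / (‖u‖ * ‖v‖)} := by
    refine ⟨u, ?_, v, ?_, hu0, hv0, rfl⟩ <;> simp [hQ, hu, hv]
  have hpos : 0 < ‖u‖ * ‖v‖ := mul_pos (norm_pos_iff.mpr hu0) (norm_pos_iff.mpr hv0)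
  calc ‖⟪u, v⟫_ℂ‖ ≤ (‖⟪u, v⟫_ℂ‖ / (‖u‖ * ‖v‖)) * (‖u‖ * ‖v‖) := by
        rw [div_mul_cancel₀ _ hpos.ne']
    _ ≤ inclination L M * (‖u‖ * ‖v‖) :=
        mul_le_mul_of_nonneg_right (le_csSup (inclination_bddAbove L M) hmem) hpos.le

theorem stmt_17 {H : Type*} [NormedAddCommGroup H] [InnerProductSpace ℂ H] [CompleteSpace H]
    (L M : Submodule ℂ H) (hL : IsClosed (L : Set H)) (hM : IsClosed (M : Set H))
    (hQ : L ⊓ M = ⊥) (hc : inclination L M < 1) :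
    ∀ x xL xM : H, xL ∈ L → xM ∈ M → x = xL + xM →
      (∀ yL ∈ L, ∀ yM ∈ M, x = yL + yM → yL = xL ∧ yM = xM) ∧
      ‖xL‖ ≤ ‖x‖ / Real.sqrt (1 - inclination L M ^ 2) ∧
      ‖xM‖ ≤ ‖x‖ / Real.sqrt (1 - inclination L M ^ 2) := by
  intro x xL xM hxL hxM hx
  set c := inclination L M with hcdef
  have hc0 : 0 ≤ c := inclination_nonneg_s17 L M
  have hc2 : 0 < 1 - c ^ 2 := by nlinarith
  -- uniqueness
  have huniq : ∀ yL ∈ L, ∀ yM ∈ M, x = yL + yM → yL = xL ∧ yM = xM := by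
    intro yL hyL yM hyM hy
    have hmem : yL - xL ∈ L ⊓ M := by
      constructor
      · exact L.sub_mem hyL hxL
      · have h : yL - xL = xM - yM := by
          rw [sub_eq_sub_iff_add_eq_add]
          exact (hx.symm.trans hy).symm.trans (add_comm xL xM)
        rw [h]; exact M.sub_mem hxM hyM
    rw [hQ] at hmem
    have h1 : yL = xL := sub_eq_zero.mp ((Submodule.mem_bot ℂ).mp hmem)
    refine ⟨h1, ?_⟩
    have := hx.symm.trans hy
    rw [h1] at this
    exact (add_left_cancel this).symm
  have key : ∀ a b : H, a ∈ L → b ∈ M →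
      ‖a‖ ^ 2 * (1 - c ^ 2) ≤ ‖a + b‖ ^ 2 ∧ ‖b‖ ^ 2 * (1 - c ^ 2) ≤ ‖a + b‖ ^ 2 := by
    intro a b ha hb
    have h1 : ‖a + b‖ ^ 2 = ‖a‖ ^ 2 + 2 * RCLike.re ⟪a, b⟫_ℂ + ‖b‖ ^ 2 := by
      exact_mod_cast norm_add_sq (𝕜 := ℂ) a b
    have h2 : |RCLike.re ⟪a, b⟫_ℂ| ≤ c * (‖a‖ * ‖b‖) :=
      le_trans (RCLike.abs_re_le_norm _) (inner_le_inclination hQ ha hb)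
    have h3 : -(c * (‖a‖ * ‖b‖)) ≤ RCLike.re ⟪a, b⟫_ℂ := neg_le_of_abs_le h2
    constructor
    · nlinarith [sq_nonneg (‖b‖ - c * ‖a‖)]
    · nlinarith [sq_nonneg (‖a‖ - c * ‖b‖)]
  have habs : ∀ y : H, ‖y‖ ^ 2 * (1 - c ^ 2) ≤ ‖x‖ ^ 2 → ‖y‖ ≤ ‖x‖ / Real.sqrt (1 - c ^ 2) := by
    intro y h
    rw [le_div_iff₀ (Real.sqrt_pos.mpr hc2)]
    nlinarith [Real.sq_sqrt hc2.le, Real.sqrt_nonneg (1 - c ^ 2), norm_nonneg y,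
      norm_nonneg x, Real.sqrt_pos.mpr hc2]
  obtain ⟨k1, k2⟩ := key xL xM hxL hxM
  rw [← hx] at k1 k2
  exact ⟨huniq, habs xL k1, habs xM k2⟩
end
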